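/- Graph-theoretical characterization of Chio realizability: Let s,t ≥ 2, let ∅ ⊆ I ⊆ J ⊆ {1,…,s−1}×{1,…,t−1}, and let B : I → {−1,0,+1}. The following four statements are equivalent: (1) the signed graph (X_B, σ_B) is balanced; (2) Col(X_B, σ_B) ≠ ∅; (3) there exists A : J̆ → {−1,+1} that condenses to B; (4) |{A : J̆ → {−1,+1} : A condenses to B}| = 2^{|J̆| − |I| − f0(X_B) + β0(X_B)}. -/

import Mathlib

/-!
Balance of `(X_B, σ_B)` amounts to a potential `h : V → {±1}` with `σ(uv) = h(u) h(v)` on every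
edge. Given balance, `h(v)` is the sign of any walk from a fixed root of the component of `v`
to `v`; this is well defined because every closed walk has sign `1`: its bypass is trivial, and
each loop the bypass removes is a cycle or an edge traversed back and forth. Negating a
potential on the column vertices turns it into a good colouring, and conversely.

An array `A` condenses to `B` iff its border entries `A(i,t)`, `A(s,j)` form a good colouring
`c` and `A(i,j) = A(s,t) (2B(i,j) + c(i) c(j))` on `I`; every other entry of `J̆`, the corner
`A(s,t)` included, is free. The good colourings are the twists of any one of them by a sign
on each component of `X_B`, so there are `2^β0` of them, and the count follows.
-/

/-- The grid of index positions `{1,…,s-1} × {1,…,t-1}`. -/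
def mgrid (s t : ℕ) : Finset (ℕ × ℕ) := Finset.Icc 1 (s - 1) ×ˢ Finset.Icc 1 (t - 1)

/-- The Chio extension `J̆` of a set `J` of positions:
`J̆ = {(s,t)} ∪ {(i,t) : i ∈ p1(J)} ∪ {(s,j) : j ∈ p2(J)} ∪ J`. -/
def chioExt (s t : ℕ) (J : Finset (ℕ × ℕ)) : Finset (ℕ × ℕ) :=
  insert (s, t) (((J.image Prod.fst).image fun i => (i, t)) ∪
    ((J.image Prod.snd).image fun j => (s, j)) ∪ J)

/-- `A` condenses to `B` on `I`:
`A(i,j)·A(s,t) − A(i,t)·A(s,j) = 2·B(i,j)` for every `(i,j) ∈ I`. -/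
def CondensesTo (s t : ℕ) (I : Finset (ℕ × ℕ)) (A B : ℕ × ℕ → ℤ) : Prop :=
  ∀ p ∈ I, A p * A (s, t) - A (p.1, t) * A (s, p.2) = 2 * B p

/-- `A` encodes a function `E → {−1,+1}`: it takes values `±1` on `E` and is
normalized to `1` off `E`. -/
def IsSignOn (E : Finset (ℕ × ℕ)) (A : ℕ × ℕ → ℤ) : Prop :=
  (∀ p ∈ E, A p = 1 ∨ A p = -1) ∧ ∀ p ∉ E, A p = 1

/-- First projection `p1(I)` of a set of positions. -/
def proj1 (I : Finset (ℕ × ℕ)) : Finset ℕ := I.image Prod.fst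

/-- Second projection `p2(I)` of a set of positions. -/
def proj2 (I : Finset (ℕ × ℕ)) : Finset ℕ := I.image Prod.snd

/-- The vertex set of the bipartite graph `X_B`: a copy `Sum.inl i` of each row index
`i ∈ p1(I)` and a copy `Sum.inr j` of each column index `j ∈ p2(I)`. -/
def vertSet (I : Finset (ℕ × ℕ)) : Finset (ℕ ⊕ ℕ) :=
  (proj1 I).image Sum.inl ∪ (proj2 I).image Sum.inr

/-- `f0(X_B) = |p1(I)| + |p2(I)|`, the number of vertices of `X_B`. -/
def fZero (I : Finset (ℕ × ℕ)) : ℕ := (proj1 I).card + (proj2 I).card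

/-- The underlying graph `X_B` of the signed bipartite graph associated with `B : I → {−1,0,+1}`:
`Sum.inl i` is adjacent to `Sum.inr j` iff `(i,j) ∈ I` and `B (i,j) ≠ 0`. -/
def sGraph (I : Finset (ℕ × ℕ)) (B : ℕ × ℕ → ℤ) : SimpleGraph (ℕ ⊕ ℕ) where
  Adj u v := (∃ p ∈ I, B p ≠ 0 ∧ u = Sum.inl p.1 ∧ v = Sum.inr p.2) ∨
             (∃ p ∈ I, B p ≠ 0 ∧ v = Sum.inl p.1 ∧ u = Sum.inr p.2)
  symm := ⟨fun u v h => Or.symm h⟩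
  loopless := by
    constructor
    rintro u (⟨p, -, -, h1, h2⟩ | ⟨p, -, -, h1, h2⟩) <;> subst h1 <;> simp at h2

/-- `β0(X_B)`: the number of connected components of `X_B`, i.e. the number of connected
components of the ambient graph meeting the vertex set of `X_B`. -/
noncomputable def betaZero (I : Finset (ℕ × ℕ)) (B : ℕ × ℕ → ℤ) : ℕ :=
  Set.ncard ((sGraph I B).connectedComponentMk '' (vertSet I : Set (ℕ ⊕ ℕ)))

/-- The sign `σ_B` of an edge of `X_B`, read off from `B`. -/
def eSign (B : ℕ × ℕ → ℤ) : ℕ ⊕ ℕ → ℕ ⊕ ℕ → ℤ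
  | Sum.inl i, Sum.inr j => B (i, j)
  | Sum.inr j, Sum.inl i => B (i, j)
  | Sum.inl _, Sum.inl _ => 0
  | Sum.inr _, Sum.inr _ => 0

/-- The signed graph `(X_B, σ_B)` is balanced: every cycle contains an even number
of edges of sign `−1`. -/
def IsBalancedSG (I : Finset (ℕ × ℕ)) (B : ℕ × ℕ → ℤ) : Prop :=
  ∀ (v : ℕ ⊕ ℕ) (w : (sGraph I B).Walk v v), w.IsCycle →
    Even ((w.darts.filter fun d => decide (eSign B d.toProd.1 d.toProd.2 = -1)).length)

/-- `c` is a `(σ_B,−)`-constant, `(σ_B,+)`-proper vertex `2`-colouring of `X_B`, encoded as a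
`±1`-valued function on the vertex set (normalized to `1` off the vertex set): endpoints of
`(−)`-edges get equal colours, endpoints of `(+)`-edges get different colours. -/
def IsGoodCol (I : Finset (ℕ × ℕ)) (B : ℕ × ℕ → ℤ) (c : ℕ ⊕ ℕ → ℤ) : Prop :=
  (∀ v ∈ vertSet I, c v = 1 ∨ c v = -1) ∧ (∀ v ∉ vertSet I, c v = 1) ∧
    ∀ p ∈ I, (B p = -1 → c (Sum.inl p.1) = c (Sum.inr p.2)) ∧
      (B p = 1 → c (Sum.inl p.1) ≠ c (Sum.inr p.2))


namespace SimpleGraph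

variable {V M : Type*} [CommMonoid M] {G : SimpleGraph V} (σ : V → V → M)

namespace Walk

def gain {u v : V} (w : G.Walk u v) : M := (w.darts.map fun d => σ d.fst d.snd).prod

@[simp] lemma gain_nil {u : V} : (nil : G.Walk u u).gain σ = 1 := rfl

@[simp] lemma gain_cons {u v w : V} (h : G.Adj u v) (p : G.Walk v w) :
    (cons h p).gain σ = σ u v * p.gain σ := by
  simp [gain]

@[simp] lemma gain_append {u v w : V} (p : G.Walk u v) (q : G.Walk v w) :
    (p.append q).gain σ = p.gain σ * q.gain σ := by
  simp [gain]

@[simp] lemma gain_copy {u v u' v' : V} (p : G.Walk u v) (hu : u = u') (hv : v = v') :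
    (p.copy hu hv).gain σ = p.gain σ := by
  subst hu hv; rfl

variable {σ}

lemma gain_reverse (hσ : ∀ ⦃u v⦄, G.Adj u v → σ v u = σ u v) {u v : V} (p : G.Walk u v) :
    p.reverse.gain σ = p.gain σ := by
  induction p with
  | nil => rfl
  | cons h p ih => rw [reverse_cons, gain_append, ih, gain_cons, gain_cons, gain_nil, mul_one,
      hσ h, mul_comm]

lemma gain_mul_self (hσ : ∀ ⦃u v⦄, G.Adj u v → σ u v * σ u v = 1) {u v : V} (p : G.Walk u v) :
    p.gain σ * p.gain σ = 1 := by
  induction p with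
  | nil => simp
  | cons h p ih =>
    rw [gain_cons, mul_mul_mul_comm, hσ h, ih, one_mul]

lemma gain_eq_mul_of_potential {h : V → M} (hh : ∀ v, h v * h v = 1)
    (hσ : ∀ ⦃u v⦄, G.Adj u v → σ u v = h u * h v) {u v : V} (p : G.Walk u v) :
    p.gain σ = h u * h v := by
  induction p with
  | nil => simp [hh]
  | @cons _ b _ hadj p ih =>
    rw [gain_cons, ih, hσ hadj, mul_assoc, ← mul_assoc (h b), hh, one_mul]

end Walk

section Balanced

open Walk

variable {σ} (hsymm : ∀ ⦃u v⦄, G.Adj u v → σ v u = σ u v)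
  (hinv : ∀ ⦃u v⦄, G.Adj u v → σ u v * σ u v = 1)
  (hcyc : ∀ (u : V) (c : G.Walk u u), c.IsCycle → c.gain σ = 1)
include hsymm hinv hcyc

/-- A closed walk made of an edge and a path is a cycle or traverses one edge back and forth. -/
lemma gain_cons_eq_one_of_isPath {u v : V} (h : G.Adj u v) {p : G.Walk v u} (hp : p.IsPath) :
    (cons h p).gain σ = 1 := by
  by_cases he : s(u, v) ∈ p.edges
  · rw [Sym2.eq_swap] at he
    rw [hp.eq_adj_toWalk_of_mem_edges he, Adj.toWalk, gain_cons, gain_cons, gain_nil, mul_one,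
      hsymm h, hinv h]
  · exact hcyc u _ ((cons_isCycle_iff p h).mpr ⟨hp, he⟩)

lemma gain_bypass [DecidableEq V] {u v : V} (p : G.Walk u v) : p.bypass.gain σ = p.gain σ := by
  induction p with
  | nil => rfl
  | cons h p ih =>
    rw [bypass]
    split_ifs with hs
    · have hsplit := congrArg (gain σ) (p.bypass.take_spec hs)
      rw [gain_append] at hsplit
      rw [gain_cons, ← ih, ← hsplit, ← mul_assoc, ← gain_cons σ h,
        gain_cons_eq_one_of_isPath hsymm hinv hcyc h ((bypass_isPath p).takeUntil hs), one_mul]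
    · rw [gain_cons, gain_cons, ih]

lemma gain_eq_one_of_closed {u : V} (p : G.Walk u u) : p.gain σ = 1 := by
  classical
  rw [← gain_bypass hsymm hinv hcyc, eq_nil_iff_nil.mpr (isPath_iff_nil.mp (bypass_isPath p)),
    gain_nil]

lemma gain_eq_gain {u v : V} (p q : G.Walk u v) : p.gain σ = q.gain σ := by
  have h := gain_eq_one_of_closed hsymm hinv hcyc (p.append q.reverse)
  rw [gain_append, gain_reverse hsymm] at h
  calc p.gain σ = p.gain σ * (q.gain σ * q.gain σ) := by rw [gain_mul_self hinv, mul_one]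
    _ = q.gain σ := by rw [← mul_assoc, h, one_mul]

lemma exists_potential_of_forall_isCycle :
    ∃ h : V → M, (∀ v, h v * h v = 1) ∧ ∀ ⦃u v⦄, G.Adj u v → σ u v = h u * h v := by
  have hroot (v : V) : G.Reachable (G.connectedComponentMk v).out v :=
    ConnectedComponent.exact (G.connectedComponentMk v).out_eq
  refine ⟨fun v => (hroot v).some.gain σ, fun v => gain_mul_self hinv _, fun u v huv => ?_⟩
  have hr : (G.connectedComponentMk u).out = (G.connectedComponentMk v).out := by
    rw [ConnectedComponent.sound huv.reachable]
  have := gain_eq_gain hsymm hinv hcyc (hroot u).some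
    (((hroot v).some.concat huv.symm).copy hr.symm rfl)
  simp only [this, gain_copy, concat, gain_append, gain_cons, gain_nil, mul_one, hsymm huv]
  rw [mul_comm, ← mul_assoc, gain_mul_self hinv, one_mul]

end Balanced

theorem forall_isCycle_gain_eq_one_iff (hsymm : ∀ ⦃u v⦄, G.Adj u v → σ v u = σ u v)
    (hinv : ∀ ⦃u v⦄, G.Adj u v → σ u v * σ u v = 1) :
    (∀ (u : V) (c : G.Walk u u), c.IsCycle → c.gain σ = 1) ↔
      ∃ h : V → M, (∀ v, h v * h v = 1) ∧ ∀ ⦃u v⦄, G.Adj u v → σ u v = h u * h v := by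
  refine ⟨exists_potential_of_forall_isCycle hsymm hinv, ?_⟩
  rintro ⟨h, hh, hσ⟩ u c -
  rw [Walk.gain_eq_mul_of_potential hh hσ, hh]

end SimpleGraph

theorem Set.ncard_setOf_eq_one_or_neg_one {α : Type*} (E : Finset α) :
    {A : α → ℤ | (∀ p ∈ E, A p = 1 ∨ A p = -1) ∧ ∀ p ∉ E, A p = 1}.ncard = 2 ^ E.card := by
  classical
  set signOf : Set α → α → ℤ := fun T p => if p ∈ T then -1 else 1
  have hsigns : {A : α → ℤ | (∀ p ∈ E, A p = 1 ∨ A p = -1) ∧ ∀ p ∉ E, A p = 1} =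
      signOf '' 𝒫 (E : Set α) := by
    ext A
    refine ⟨fun ⟨hE, hout⟩ => ⟨{p | A p = -1}, fun p hp => ?_, funext fun p => ?_⟩, ?_⟩
    · by_contra hpE
      simp_all
    · by_cases hp : p ∈ E
      · rcases hE p hp with h | h <;> simp [signOf, h]
      · simp [signOf, hout p hp]
    · rintro ⟨T, hT, rfl⟩
      refine ⟨fun p _ => by simp only [signOf]; split_ifs <;> simp, fun p hp => ?_⟩
      simp [signOf, show p ∉ T from fun h => hp (hT h)]
  have hinj : Set.InjOn signOf (𝒫 (E : Set α)) := fun T _ T' _ h => by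
    ext p
    have := congrFun h p
    simp only [signOf] at this
    split_ifs at this <;> simp_all
  rw [hsigns, hinj.ncard_image, Set.ncard_powerset _ E.finite_toSet, Set.ncard_coe_finset]

section SignedGraph

open SimpleGraph

variable {I : Finset (ℕ × ℕ)} {B : ℕ × ℕ → ℤ}

@[simp] lemma inl_mem_vertSet {i : ℕ} : Sum.inl i ∈ vertSet I ↔ i ∈ proj1 I := by
  simp [vertSet]

@[simp] lemma inr_mem_vertSet {j : ℕ} : Sum.inr j ∈ vertSet I ↔ j ∈ proj2 I := by
  simp [vertSet]

lemma fst_mem_proj1 {p : ℕ × ℕ} (hp : p ∈ I) : p.1 ∈ proj1 I := Finset.mem_image_of_mem _ hp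

lemma snd_mem_proj2 {p : ℕ × ℕ} (hp : p ∈ I) : p.2 ∈ proj2 I := Finset.mem_image_of_mem _ hp

lemma eSign_comm (B : ℕ × ℕ → ℤ) (u v : ℕ ⊕ ℕ) : eSign B v u = eSign B u v := by
  cases u <;> cases v <;> rfl

lemma exists_eq_eSign_of_adj {u v : ℕ ⊕ ℕ} (h : (sGraph I B).Adj u v) :
    ∃ p ∈ I, B p ≠ 0 ∧ eSign B u v = B p := by
  rcases h with ⟨p, hp, hb, rfl, rfl⟩ | ⟨p, hp, hb, rfl, rfl⟩ <;> exact ⟨p, hp, hb, rfl⟩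

lemma forall_sGraph_adj_iff {h : ℕ ⊕ ℕ → ℤ} :
    (∀ ⦃u v⦄, (sGraph I B).Adj u v → eSign B u v = h u * h v) ↔
      ∀ p ∈ I, B p ≠ 0 → B p = h (.inl p.1) * h (.inr p.2) := by
  refine ⟨fun H p hp hb => H (Or.inl ⟨p, hp, hb, rfl, rfl⟩), ?_⟩
  rintro H u v (⟨p, hp, hb, rfl, rfl⟩ | ⟨p, hp, hb, rfl, rfl⟩)
  · exact H p hp hb
  · rw [eSign_comm, mul_comm]
    exact H p hp hb

variable {c c₀ : ℕ ⊕ ℕ → ℤ}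

lemma IsGoodCol.mul_self (hc : IsGoodCol I B c) (v : ℕ ⊕ ℕ) : c v * c v = 1 := by
  by_cases hv : v ∈ vertSet I
  · exact mul_self_eq_one_iff.mpr (hc.1 v hv)
  · rw [hc.2.1 v hv, one_mul]

variable (hB : ∀ p ∈ I, B p = -1 ∨ B p = 0 ∨ B p = 1)
include hB

lemma eSign_eq_one_or_neg_one {u v : ℕ ⊕ ℕ} (h : (sGraph I B).Adj u v) :
    eSign B u v = 1 ∨ eSign B u v = -1 := by
  obtain ⟨p, hp, hb, he⟩ := exists_eq_eSign_of_adj h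
  rw [he]
  have := hB p hp
  tauto

lemma gain_eSign_eq_neg_one_pow {u v : ℕ ⊕ ℕ} (w : (sGraph I B).Walk u v) :
    w.gain (eSign B) =
      (-1) ^ (w.darts.filter fun d => decide (eSign B d.toProd.1 d.toProd.2 = -1)).length := by
  rw [Walk.gain, List.prod_eq_pow_single (-1), List.count_eq_countP, List.countP_map,
    List.countP_eq_length_filter]
  · rfl
  · simp only [List.mem_map]
    rintro _ hne ⟨d, -, rfl⟩
    exact (eSign_eq_one_or_neg_one hB d.adj).resolve_right hne

lemma isBalancedSG_iff :
    IsBalancedSG I B ↔ ∀ (u : ℕ ⊕ ℕ) (c : (sGraph I B).Walk u u), c.IsCycle →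
      c.gain (eSign B) = 1 := by
  simp only [IsBalancedSG, gain_eSign_eq_neg_one_pow hB,
    neg_one_pow_eq_one_iff_even (show (-1 : ℤ) ≠ 1 by decide)]

lemma isGoodCol_iff :
    IsGoodCol I B c ↔ (∀ v ∈ vertSet I, c v = 1 ∨ c v = -1) ∧ (∀ v ∉ vertSet I, c v = 1) ∧
      ∀ p ∈ I, B p ≠ 0 → B p = -(c (.inl p.1) * c (.inr p.2)) := by
  refine and_congr_right fun hc => and_congr_right fun _ => forall₂_congr fun p hp => ?_
  have hi := hc (.inl p.1) (inl_mem_vertSet.mpr (fst_mem_proj1 hp))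
  have hj := hc (.inr p.2) (inr_mem_vertSet.mpr (snd_mem_proj2 hp))
  rcases hB p hp with h | h | h <;> rcases hi with hi | hi <;> rcases hj with hj | hj <;>
    simp [h, hi, hj]

lemma exists_isGoodCol_iff :
    (∃ c, IsGoodCol I B c) ↔ ∃ h : ℕ ⊕ ℕ → ℤ, (∀ v, h v * h v = 1) ∧
      ∀ p ∈ I, B p ≠ 0 → B p = h (.inl p.1) * h (.inr p.2) := by
  simp only [isGoodCol_iff hB]
  constructor
  · rintro ⟨c, hc, hout, hcB⟩
    refine ⟨fun v => Sum.elim (fun _ => (1 : ℤ)) (fun _ => -1) v * c v, fun v => ?_,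
      fun p hp hb => ?_⟩
    · have : c v = 1 ∨ c v = -1 := by
        by_cases hv : v ∈ vertSet I
        exacts [hc v hv, Or.inl (hout v hv)]
      cases v <;> rcases this with h | h <;> simp [h]
    · simp [hcB p hp hb]
  · rintro ⟨h, hh, hhB⟩
    refine ⟨fun v => if v ∈ vertSet I then Sum.elim (fun _ => (1 : ℤ)) (fun _ => -1) v * h v
      else 1, fun v hv => ?_, fun v hv => if_neg hv, fun p hp hb => ?_⟩
    · dsimp only
      rw [if_pos hv, ← mul_self_eq_one_iff]
      cases v <;> simp [hh]
    · dsimp only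
      rw [if_pos (inl_mem_vertSet.mpr (fst_mem_proj1 hp)),
        if_pos (inr_mem_vertSet.mpr (snd_mem_proj2 hp)), hhB p hp hb]
      simp

theorem isBalancedSG_iff_exists_isGoodCol : IsBalancedSG I B ↔ ∃ c, IsGoodCol I B c := by
  have hinv : ∀ ⦃u v⦄, (sGraph I B).Adj u v → eSign B u v * eSign B u v = 1 := fun u v h =>
    mul_self_eq_one_iff.mpr (eSign_eq_one_or_neg_one hB h)
  rw [isBalancedSG_iff hB, forall_isCycle_gain_eq_one_iff (G := sGraph I B) (σ := eSign B)
    (fun u v _ => eSign_comm B u v) hinv, exists_isGoodCol_iff hB]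
  simp only [forall_sGraph_adj_iff]

lemma IsGoodCol.mul_eq_mul_of_adj (hc : IsGoodCol I B c) (hc₀ : IsGoodCol I B c₀) {u v : ℕ ⊕ ℕ}
    (h : (sGraph I B).Adj u v) : c u * c₀ u = c v * c₀ v := by
  suffices key : ∀ p ∈ I, B p ≠ 0 →
      c (.inl p.1) * c₀ (.inl p.1) = c (.inr p.2) * c₀ (.inr p.2) by
    rcases h with ⟨p, hp, hb, rfl, rfl⟩ | ⟨p, hp, hb, rfl, rfl⟩
    exacts [key p hp hb, (key p hp hb).symm]
  intro p hp hb
  have h₁ := ((isGoodCol_iff hB).mp hc).2.2 p hp hb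
  have h₀ := ((isGoodCol_iff hB).mp hc₀).2.2 p hp hb
  linear_combination -(c (.inl p.1) * c₀ (.inl p.1)) * hc.mul_self (.inr p.2) -
    c (.inr p.2) * c₀ (.inl p.1) * (h₀ - h₁) +
    c (.inr p.2) * c₀ (.inr p.2) * hc₀.mul_self (.inl p.1)

lemma IsGoodCol.mul_eq_mul_of_reachable (hc : IsGoodCol I B c) (hc₀ : IsGoodCol I B c₀)
    {u v : ℕ ⊕ ℕ} (h : (sGraph I B).Reachable u v) : c u * c₀ u = c v * c₀ v := by
  obtain ⟨w⟩ := h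
  induction w with
  | nil => rfl
  | cons hadj _ ih => exact (hc.mul_eq_mul_of_adj hB hc₀ hadj).trans ih

def twistColouring (I : Finset (ℕ × ℕ)) (B : ℕ × ℕ → ℤ) (c₀ : ℕ ⊕ ℕ → ℤ)
    (g : (sGraph I B).ConnectedComponent → ℤ) (v : ℕ ⊕ ℕ) : ℤ :=
  if v ∈ vertSet I then c₀ v * g ((sGraph I B).connectedComponentMk v) else 1

lemma isGoodCol_twistColouring (hc₀ : IsGoodCol I B c₀)
    {g : (sGraph I B).ConnectedComponent → ℤ}
    (hg : ∀ v ∈ vertSet I, g ((sGraph I B).connectedComponentMk v) = 1 ∨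
      g ((sGraph I B).connectedComponentMk v) = -1) :
    IsGoodCol I B (twistColouring I B c₀ g) := by
  have hg1 (v : ℕ ⊕ ℕ) (hv : v ∈ vertSet I) :
      g ((sGraph I B).connectedComponentMk v) * g ((sGraph I B).connectedComponentMk v) = 1 :=
    mul_self_eq_one_iff.mpr (hg v hv)
  refine (isGoodCol_iff hB).mpr ⟨fun v hv => ?_, fun v hv => if_neg hv, fun p hp hb => ?_⟩
  · rw [twistColouring, if_pos hv, ← mul_self_eq_one_iff]
    linear_combination g ((sGraph I B).connectedComponentMk v) *
      g ((sGraph I B).connectedComponentMk v) * hc₀.mul_self v + hg1 v hv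
  · have hi := inl_mem_vertSet.mpr (fst_mem_proj1 hp)
    have hj := inr_mem_vertSet.mpr (snd_mem_proj2 hp)
    have hK : (sGraph I B).connectedComponentMk (.inl p.1) =
        (sGraph I B).connectedComponentMk (.inr p.2) :=
      ConnectedComponent.sound (Adj.reachable (Or.inl ⟨p, hp, hb, rfl, rfl⟩))
    rw [twistColouring, twistColouring, if_pos hi, if_pos hj, hK]
    linear_combination ((isGoodCol_iff hB).mp hc₀).2.2 p hp hb +
      c₀ (.inl p.1) * c₀ (.inr p.2) * hg1 _ hj

lemma IsGoodCol.exists_eq_twistColouring (hc : IsGoodCol I B c) (hc₀ : IsGoodCol I B c₀) :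
    ∃ g : (sGraph I B).ConnectedComponent → ℤ,
      (∀ v ∈ vertSet I, g ((sGraph I B).connectedComponentMk v) = 1 ∨
        g ((sGraph I B).connectedComponentMk v) = -1) ∧
      (∀ v ∉ vertSet I, g ((sGraph I B).connectedComponentMk v) = 1) ∧
      twistColouring I B c₀ g = c := by
  set g := ConnectedComponent.lift (fun v => c v * c₀ v)
    fun v w p _ => IsGoodCol.mul_eq_mul_of_reachable hB hc hc₀ p.reachable
  have hg (v : ℕ ⊕ ℕ) : g ((sGraph I B).connectedComponentMk v) = c v * c₀ v := rfl
  refine ⟨g, fun v _ => ?_, fun v hv => ?_, funext fun v => ?_⟩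
  · rw [hg, ← mul_self_eq_one_iff]
    linear_combination c v * c v * hc₀.mul_self v + hc.mul_self v
  · rw [hg, hc.2.1 v hv, hc₀.2.1 v hv, one_mul]
  · rw [twistColouring]
    split_ifs with hv
    · rw [hg]
      linear_combination c v * hc₀.mul_self v
    · exact (hc.2.1 v hv).symm

/-- Good colourings are the twists of a fixed one `c₀` by a sign on each component. -/
theorem ncard_isGoodCol (hc₀ : IsGoodCol I B c₀) :
    {c | IsGoodCol I B c}.ncard = 2 ^ betaZero I B := by
  classical
  set mk := (sGraph I B).connectedComponentMk
  set comps := (vertSet I).image mk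
  have hβ : betaZero I B = comps.card := by
    rw [betaZero, ← Finset.coe_image, Set.ncard_coe_finset]
  rw [hβ, ← Set.ncard_setOf_eq_one_or_neg_one comps]
  symm
  refine Set.ncard_congr (fun g _ => twistColouring I B c₀ g)
    (fun g ⟨hg, _⟩ =>
      isGoodCol_twistColouring hB hc₀ fun v hv => hg _ (Finset.mem_image_of_mem mk hv))
    (fun g g' ⟨_, hg⟩ ⟨_, hg'⟩ h => funext fun K => ?_) (fun c hc => ?_)
  · by_cases hK : K ∈ comps
    · obtain ⟨v, hv, rfl⟩ := Finset.mem_image.mp hK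
      have := congrFun h v
      simp only [twistColouring, if_pos hv] at this
      exact mul_left_cancel₀ (fun h0 => by simpa [h0] using hc₀.mul_self v) this
    · rw [hg K hK, hg' K hK]
  · obtain ⟨g, hg, hg', rfl⟩ := hc.exists_eq_twistColouring hB hc₀
    refine ⟨g, ⟨fun K hK => ?_, fun K hK => ?_⟩, rfl⟩
    · obtain ⟨v, hv, rfl⟩ := Finset.mem_image.mp hK
      exact hg v hv
    · induction K using ConnectedComponent.ind with | h v => ?_
      exact hg' v fun hv => hK (Finset.mem_image_of_mem mk hv)

end SignedGraph

section Chio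

variable {s t : ℕ} {I J : Finset (ℕ × ℕ)} {B : ℕ × ℕ → ℤ}

lemma lt_of_mem_mgrid {p : ℕ × ℕ} (hp : p ∈ mgrid s t) : p.1 < s ∧ p.2 < t := by
  simp only [mgrid, Finset.mem_product, Finset.mem_Icc] at hp
  omega

lemma IsSignOn.mul_self {E : Finset (ℕ × ℕ)} {A : ℕ × ℕ → ℤ} (hA : IsSignOn E A) (p : ℕ × ℕ) :
    A p * A p = 1 := by
  by_cases hp : p ∈ E
  · exact mul_self_eq_one_iff.mpr (hA.1 p hp)
  · rw [hA.2 p hp, one_mul]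

lemma corner_mem_chioExt : (s, t) ∈ chioExt s t J := Finset.mem_insert_self _ _

lemma row_mem_chioExt {i : ℕ} (hi : i ∈ proj1 J) : (i, t) ∈ chioExt s t J :=
  Finset.mem_insert_of_mem <| Finset.mem_union_left _ <| Finset.mem_union_left _ <|
    Finset.mem_image_of_mem _ hi

lemma col_mem_chioExt {j : ℕ} (hj : j ∈ proj2 J) : (s, j) ∈ chioExt s t J :=
  Finset.mem_insert_of_mem <| Finset.mem_union_left _ <| Finset.mem_union_right _ <|
    Finset.mem_image_of_mem _ hj

lemma mem_chioExt_of_mem {p : ℕ × ℕ} (hp : p ∈ J) : p ∈ chioExt s t J :=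
  Finset.mem_insert_of_mem (Finset.mem_union_right _ hp)

def borderColouring (s t : ℕ) (I : Finset (ℕ × ℕ)) (A : ℕ × ℕ → ℤ) (v : ℕ ⊕ ℕ) : ℤ :=
  if v ∈ vertSet I then A (Sum.elim (·, t) (s, ·) v) else 1

@[simp] lemma borderColouring_inl {A : ℕ × ℕ → ℤ} {i : ℕ} :
    borderColouring s t I A (.inl i) = if i ∈ proj1 I then A (i, t) else 1 := by
  simp [borderColouring]

@[simp] lemma borderColouring_inr {A : ℕ × ℕ → ℤ} {j : ℕ} :
    borderColouring s t I A (.inr j) = if j ∈ proj2 I then A (s, j) else 1 := by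
  simp [borderColouring]

lemma signs_of_condensation {a b x y β : ℤ} (ha : a = 1 ∨ a = -1) (hb : b = 1 ∨ b = -1)
    (hx : x = 1 ∨ x = -1) (hy : y = 1 ∨ y = -1) (h : a * b - x * y = 2 * β) :
    (β = -1 → x = y) ∧ (β = 1 → x ≠ y) := by
  rcases ha with rfl | rfl <;> rcases hb with rfl | rfl <;> rcases hx with rfl | rfl <;>
    rcases hy with rfl | rfl <;> omega

lemma isGoodCol_borderColouring (hIJ : I ⊆ J) {A : ℕ × ℕ → ℤ} (hA : IsSignOn (chioExt s t J) A)
    (hAB : CondensesTo s t I A B) : IsGoodCol I B (borderColouring s t I A) := by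
  refine ⟨fun v hv => ?_, fun v hv => if_neg hv, fun p hp => ?_⟩
  · cases v with
    | inl i =>
      rw [inl_mem_vertSet] at hv
      simpa [hv] using hA.1 _ (row_mem_chioExt (Finset.image_subset_image hIJ hv))
    | inr j =>
      rw [inr_mem_vertSet] at hv
      simpa [hv] using hA.1 _ (col_mem_chioExt (Finset.image_subset_image hIJ hv))
  · simp only [borderColouring_inl, borderColouring_inr, if_pos (fst_mem_proj1 hp),
      if_pos (snd_mem_proj2 hp)]
    exact signs_of_condensation (hA.1 p (mem_chioExt_of_mem (hIJ hp)))
      (hA.1 _ corner_mem_chioExt)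
      (hA.1 _ (row_mem_chioExt (Finset.image_subset_image hIJ (fst_mem_proj1 hp))))
      (hA.1 _ (col_mem_chioExt (Finset.image_subset_image hIJ (snd_mem_proj2 hp)))) (hAB p hp)

def fixedCells (s t : ℕ) (I : Finset (ℕ × ℕ)) : Finset (ℕ × ℕ) :=
  I ∪ (proj1 I).image (·, t) ∪ (proj2 I).image (s, ·)

def freeCells (s t : ℕ) (I J : Finset (ℕ × ℕ)) : Finset (ℕ × ℕ) :=
  chioExt s t J \ fixedCells s t I

lemma mem_fixedCells {p : ℕ × ℕ} :
    p ∈ fixedCells s t I ↔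
      p ∈ I ∨ (p.2 = t ∧ p.1 ∈ proj1 I) ∨ (p.1 = s ∧ p.2 ∈ proj2 I) := by
  obtain ⟨a, b⟩ := p
  simp only [fixedCells, Finset.mem_union, Finset.mem_image, Prod.mk.injEq]
  grind

lemma card_fixedCells (hI : ∀ p ∈ I, p.1 < s ∧ p.2 < t) :
    (fixedCells s t I).card = I.card + fZero I := by
  have hrow : Disjoint I ((proj1 I).image (·, t)) := by
    rw [Finset.disjoint_right]
    rintro _ hp hpI
    obtain ⟨i, -, rfl⟩ := Finset.mem_image.mp hp
    exact (hI _ hpI).2.ne rfl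
  have hcol : Disjoint (I ∪ (proj1 I).image (·, t)) ((proj2 I).image (s, ·)) := by
    rw [Finset.disjoint_right]
    rintro _ hp hpIR
    obtain ⟨j, hj, rfl⟩ := Finset.mem_image.mp hp
    rcases Finset.mem_union.mp hpIR with hpI | hpR
    · exact (hI _ hpI).1.ne rfl
    · obtain ⟨i, hi, hij⟩ := Finset.mem_image.mp hpR
      obtain ⟨q, hq, rfl⟩ := Finset.mem_image.mp hi
      exact (hI q hq).1.ne (Prod.mk.inj hij).1
  rw [fixedCells, Finset.card_union_of_disjoint hcol, Finset.card_union_of_disjoint hrow,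
    Finset.card_image_of_injective _ (fun a b h => (Prod.mk.inj h).1),
    Finset.card_image_of_injective _ (fun a b h => (Prod.mk.inj h).2), fZero, add_assoc]

lemma fixedCells_subset_chioExt (hIJ : I ⊆ J) : fixedCells s t I ⊆ chioExt s t J := by
  intro p hp
  rcases mem_fixedCells.mp hp with hpI | ⟨h, hi⟩ | ⟨h, hj⟩
  · exact mem_chioExt_of_mem (hIJ hpI)
  · rw [← h]
    exact row_mem_chioExt (Finset.image_subset_image hIJ hi)
  · rw [← h]
    exact col_mem_chioExt (Finset.image_subset_image hIJ hj)

lemma card_freeCells_add (hIJ : I ⊆ J) (hI : ∀ p ∈ I, p.1 < s ∧ p.2 < t) :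
    (freeCells s t I J).card + (I.card + fZero I) = (chioExt s t J).card := by
  rw [freeCells, ← card_fixedCells hI,
    Finset.card_sdiff_add_card_eq_card (fixedCells_subset_chioExt hIJ)]

lemma corner_not_mem_fixedCells (hI : ∀ p ∈ I, p.1 < s ∧ p.2 < t) :
    (s, t) ∉ fixedCells s t I := by
  simp only [mem_fixedCells, proj1, proj2, Finset.mem_image, not_or, not_and, not_exists]
  refine ⟨fun h => (hI _ h).1.false, fun _ p hp h => (hI p hp).1.ne h, fun _ p hp h => ?_⟩
  exact (hI p hp).2.ne h

/-- The unique condensing array with free entries `f` and border colouring `c`. -/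
def fillArray (s t : ℕ) (I : Finset (ℕ × ℕ)) (B f : ℕ × ℕ → ℤ) (c : ℕ ⊕ ℕ → ℤ)
    (p : ℕ × ℕ) : ℤ :=
  if p ∈ I then f (s, t) * (2 * B p + c (.inl p.1) * c (.inr p.2))
  else if p.2 = t ∧ p.1 ∈ proj1 I then c (.inl p.1)
  else if p.1 = s ∧ p.2 ∈ proj2 I then c (.inr p.2)
  else f p

section fillArray

variable {f : ℕ × ℕ → ℤ} {c : ℕ ⊕ ℕ → ℤ}

lemma fillArray_of_mem {p : ℕ × ℕ} (hp : p ∈ I) :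
    fillArray s t I B f c p = f (s, t) * (2 * B p + c (.inl p.1) * c (.inr p.2)) :=
  if_pos hp

lemma fillArray_of_not_mem_fixedCells {p : ℕ × ℕ} (hp : p ∉ fixedCells s t I) :
    fillArray s t I B f c p = f p := by
  simp only [mem_fixedCells, not_or] at hp
  simp only [fillArray, if_neg hp.1, if_neg hp.2.1, if_neg hp.2.2]

lemma mul_self_fillArray (hB : ∀ p ∈ I, B p = -1 ∨ B p = 0 ∨ B p = 1)
    (hf : ∀ p, f p * f p = 1) (hc : IsGoodCol I B c) (p : ℕ × ℕ) :
    fillArray s t I B f c p * fillArray s t I B f c p = 1 := by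
  unfold fillArray
  split_ifs with hp
  · set x := c (.inl p.1) * c (.inr p.2)
    have hx : x * x = 1 := by
      linear_combination c (.inr p.2) * c (.inr p.2) * hc.mul_self (.inl p.1) +
        hc.mul_self (.inr p.2)
    have hsum : (2 * B p + x) * (2 * B p + x) = 1 := by
      by_cases hb : B p = 0
      · rw [hb]
        linear_combination hx
      · rw [((isGoodCol_iff hB).mp hc).2.2 p hp hb]
        linear_combination hx
    linear_combination (2 * B p + x) * (2 * B p + x) * hf (s, t) + hsum
  all_goals first | exact hc.mul_self _ | exact hf p

lemma piecewise_fillArray (hf : IsSignOn (freeCells s t I J) f) :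
    (freeCells s t I J).piecewise (fillArray s t I B f c) 1 = f := by
  funext p
  by_cases hp : p ∈ freeCells s t I J
  · rw [Finset.piecewise_eq_of_mem _ _ _ hp,
      fillArray_of_not_mem_fixedCells (Finset.mem_sdiff.mp hp).2]
  · rw [Finset.piecewise_eq_of_notMem _ _ _ hp, hf.2 p hp, Pi.one_apply]

variable (hI : ∀ p ∈ I, p.1 < s ∧ p.2 < t)
include hI

lemma fillArray_row {i : ℕ} (hi : i ∈ proj1 I) : fillArray s t I B f c (i, t) = c (.inl i) := by
  have : (i, t) ∉ I := fun h => (hI _ h).2.false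
  rw [fillArray, if_neg this, if_pos ⟨rfl, hi⟩]

lemma fillArray_col {j : ℕ} (hj : j ∈ proj2 I) : fillArray s t I B f c (s, j) = c (.inr j) := by
  have h₁ : (s, j) ∉ I := fun h => (hI _ h).1.false
  have h₂ : s ∉ proj1 I := fun h => by
    obtain ⟨p, hp, rfl⟩ := Finset.mem_image.mp h
    exact (hI p hp).1.false
  rw [fillArray, if_neg h₁, if_neg (fun h => h₂ h.2), if_pos ⟨rfl, hj⟩]

lemma fillArray_corner : fillArray s t I B f c (s, t) = f (s, t) :=
  fillArray_of_not_mem_fixedCells (corner_not_mem_fixedCells hI)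

lemma borderColouring_fillArray (hc : IsGoodCol I B c) :
    borderColouring s t I (fillArray s t I B f c) = c := by
  funext v
  cases v with
  | inl i =>
    rw [borderColouring_inl]
    split_ifs with hi
    exacts [fillArray_row hI hi, (hc.2.1 _ (mt inl_mem_vertSet.mp hi)).symm]
  | inr j =>
    rw [borderColouring_inr]
    split_ifs with hj
    exacts [fillArray_col hI hj, (hc.2.1 _ (mt inr_mem_vertSet.mp hj)).symm]

lemma corner_mem_freeCells : (s, t) ∈ freeCells s t I J :=
  Finset.mem_sdiff.mpr ⟨corner_mem_chioExt, corner_not_mem_fixedCells hI⟩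

lemma isSignOn_fillArray_and_condensesTo (hB : ∀ p ∈ I, B p = -1 ∨ B p = 0 ∨ B p = 1)
    (hIJ : I ⊆ J) (hf : IsSignOn (freeCells s t I J) f) (hc : IsGoodCol I B c) :
    IsSignOn (chioExt s t J) (fillArray s t I B f c) ∧
      CondensesTo s t I (fillArray s t I B f c) B := by
  refine ⟨⟨fun p _ => mul_self_eq_one_iff.mp (mul_self_fillArray hB hf.mul_self hc p),
    fun p hp => ?_⟩, fun p hp => ?_⟩
  · rw [fillArray_of_not_mem_fixedCells fun h => hp (fixedCells_subset_chioExt hIJ h)]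
    exact hf.2 p fun h => hp (Finset.sdiff_subset h)
  · rw [fillArray_of_mem hp, fillArray_corner hI, fillArray_row hI (fst_mem_proj1 hp),
      fillArray_col hI (snd_mem_proj2 hp)]
    linear_combination (2 * B p + c (.inl p.1) * c (.inr p.2)) * hf.mul_self (s, t)

lemma fillArray_piecewise_borderColouring {A : ℕ × ℕ → ℤ}
    (hA : IsSignOn (chioExt s t J) A) (hAB : CondensesTo s t I A B) :
    fillArray s t I B ((freeCells s t I J).piecewise A 1) (borderColouring s t I A) = A := by
  funext p
  unfold fillArray
  split_ifs with hp hrow hcol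
  · rw [Finset.piecewise_eq_of_mem _ _ _ (corner_mem_freeCells hI), borderColouring_inl,
      borderColouring_inr, if_pos (fst_mem_proj1 hp), if_pos (snd_mem_proj2 hp)]
    linear_combination (-A (s, t)) * hAB p hp + A p * hA.mul_self (s, t)
  · rw [borderColouring_inl, if_pos hrow.2, ← hrow.1]
  · rw [borderColouring_inr, if_pos hcol.2, ← hcol.1]
  · by_cases hfree : p ∈ freeCells s t I J
    · exact Finset.piecewise_eq_of_mem _ _ _ hfree
    · have hfix : p ∉ fixedCells s t I := by
        rw [mem_fixedCells]
        tauto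
      rw [Finset.piecewise_eq_of_notMem _ _ _ hfree, Pi.one_apply, hA.2 p fun h =>
        hfree (Finset.mem_sdiff.mpr ⟨h, hfix⟩)]

end fillArray

/-- A condensing array is freely chosen on the free cells and, on the border, is a good
colouring; its entries in `I` are then forced. -/
theorem ncard_condensing (hB : ∀ p ∈ I, B p = -1 ∨ B p = 0 ∨ B p = 1) (hIJ : I ⊆ J)
    (hI : ∀ p ∈ I, p.1 < s ∧ p.2 < t) :
    {A | IsSignOn (chioExt s t J) A ∧ CondensesTo s t I A B}.ncard =
      2 ^ (freeCells s t I J).card * {c | IsGoodCol I B c}.ncard := by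
  rw [← Set.ncard_setOf_eq_one_or_neg_one (freeCells s t I J), ← Set.ncard_prod]
  symm
  refine Set.ncard_congr (fun fc _ => fillArray s t I B fc.1 fc.2)
    (fun fc ⟨hf, hc⟩ => isSignOn_fillArray_and_condensesTo hI hB hIJ hf hc)
    (fun fc fc' ⟨hf, hc⟩ ⟨hf', hc'⟩ h => Prod.ext ?_ ?_)
    (fun A ⟨hA, hAB⟩ => ⟨((freeCells s t I J).piecewise A 1, borderColouring s t I A),
      ⟨⟨fun p hp => ?_, fun p hp => ?_⟩, isGoodCol_borderColouring hIJ hA hAB⟩,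
      fillArray_piecewise_borderColouring hI hA hAB⟩)
  · rw [← piecewise_fillArray hf, ← piecewise_fillArray hf', h]
  · rw [← borderColouring_fillArray hI hc, ← borderColouring_fillArray hI hc', h]
  · dsimp only
    rw [Finset.piecewise_eq_of_mem _ _ _ hp]
    exact hA.1 p (Finset.sdiff_subset hp)
  · exact Finset.piecewise_eq_of_notMem _ _ _ hp

end Chio

/-- Count (4) is stated multiplied through by `2^{|I| + f0(X_B)}` to avoid subtracting
naturals. -/
theorem chio_realizability_characterization_general (s t : ℕ)
    (I J : Finset (ℕ × ℕ)) (hIJ : I ⊆ J) (hJ : J ⊆ mgrid s t)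
    (B : ℕ × ℕ → ℤ) (hB : ∀ p ∈ I, B p = -1 ∨ B p = 0 ∨ B p = 1) :
    (IsBalancedSG I B ↔ ∃ c, IsGoodCol I B c) ∧
    ((∃ c, IsGoodCol I B c) ↔
      ∃ A, IsSignOn (chioExt s t J) A ∧ CondensesTo s t I A B) ∧
    ((∃ A, IsSignOn (chioExt s t J) A ∧ CondensesTo s t I A B) ↔
      Set.ncard {A : ℕ × ℕ → ℤ | IsSignOn (chioExt s t J) A ∧ CondensesTo s t I A B} *
          2 ^ (I.card + fZero I) =
        2 ^ ((chioExt s t J).card + betaZero I B)) := by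
  have hI : ∀ p ∈ I, p.1 < s ∧ p.2 < t := fun p hp => lt_of_mem_mgrid (hJ (hIJ hp))
  have hcol_iff_cond : (∃ c, IsGoodCol I B c) ↔
      ∃ A, IsSignOn (chioExt s t J) A ∧ CondensesTo s t I A B :=
    ⟨fun ⟨c, hc⟩ => ⟨_, isSignOn_fillArray_and_condensesTo (f := 1) hI hB hIJ
        ⟨fun _ _ => Or.inl rfl, fun _ _ => rfl⟩ hc⟩,
      fun ⟨A, hA, hAB⟩ => ⟨_, isGoodCol_borderColouring hIJ hA hAB⟩⟩
  refine ⟨isBalancedSG_iff_exists_isGoodCol hB, hcol_iff_cond, fun hA => ?_, fun hcount => ?_⟩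
  · obtain ⟨c₀, hc₀⟩ := hcol_iff_cond.mpr hA
    rw [ncard_condensing hB hIJ hI, ncard_isGoodCol hB hc₀, ← card_freeCells_add hIJ hI]
    ring
  · have hne : Set.ncard {A | IsSignOn (chioExt s t J) A ∧ CondensesTo s t I A B} ≠ 0 := by
      intro h0
      rw [h0, zero_mul] at hcount
      exact pow_ne_zero _ two_ne_zero hcount.symm
    exact Set.nonempty_of_ncard_ne_zero hne

/-- **Graph-theoretical characterization of Chio realizability.** For `s,t ≥ 2`,
`I ⊆ J ⊆ {1,…,s-1}×{1,…,t-1}` and `B : I → {−1,0,+1}`, the following are equivalent: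
(1) `(X_B, σ_B)` is balanced; (2) `Col(X_B, σ_B) ≠ ∅`; (3) some `A : J̆ → {±1}` condenses
to `B`; (4) `|{A : J̆ → {±1} : A condenses to B}| = 2^{|J̆| − |I| − f0(X_B) + β0(X_B)}`
(stated multiplied through by `2^{|I| + f0(X_B)}` to avoid subtraction of naturals). -/
theorem chio_realizability_characterization (s t : ℕ) (hs : 2 ≤ s) (ht : 2 ≤ t)
    (I J : Finset (ℕ × ℕ)) (hIJ : I ⊆ J) (hJ : J ⊆ mgrid s t)
    (B : ℕ × ℕ → ℤ) (hB : ∀ p ∈ I, B p = -1 ∨ B p = 0 ∨ B p = 1) :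
    (IsBalancedSG I B ↔ ∃ c, IsGoodCol I B c) ∧
    ((∃ c, IsGoodCol I B c) ↔
      ∃ A, IsSignOn (chioExt s t J) A ∧ CondensesTo s t I A B) ∧
    ((∃ A, IsSignOn (chioExt s t J) A ∧ CondensesTo s t I A B) ↔
      Set.ncard {A : ℕ × ℕ → ℤ | IsSignOn (chioExt s t J) A ∧ CondensesTo s t I A B} *
          2 ^ (I.card + fZero I) =
        2 ^ ((chioExt s t J).card + betaZero I B)) :=
  chio_realizability_characterization_general s t I J hIJ hJ B hB
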